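/- arXiv:1805.02040 — 3 statements merged into one kernel-verified Lean document; each statement's English description precedes it below -/
import Mathlib

section
/- Let R be a discrete valuation ring with valuation v, and let x = (x_{ij}) be a 2×n matrix over R whose first entry is of the form 1+x11 with x11 in the maximal ideal, and all other entries x_{ij} lie in the maximal ideal. For 1 ≤ i < j ≤ n, let M_{ij} = x_{1i}x_{2j} − x_{1j}x_{2i} be the 2×2 minor on columns i and j. Then the minimum of v(M_{ij}) over all pairs 1 ≤ i < j ≤ n equals the minimum of v(M_{1j}) over j in {2,...,n}. -/
open IsDiscreteValuationRing IsLocalRing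

/-!
Since `x 0 0` is a unit, the Plücker relation
`x 0 0 * M i j = x 0 i * M 0 j - x 0 j * M 0 i` and the ultrametric inequality give
`v (M i j) ≥ min (v (M 0 i)) (v (M 0 j))` for `0 < i < j`.
-/

theorem isUnit_one_add_of_mem_maximalIdeal {R : Type*} [CommRing R] [IsLocalRing R] {m : R}
    (hm : m ∈ maximalIdeal R) : IsUnit (1 + m) :=
  notMem_maximalIdeal.mp fun h =>
    (maximalIdeal R).ne_top_iff_one.mp (maximalIdeal.isMaximal R).ne_top
      (by simpa using sub_mem h hm)

section Minor

variable {R ι : Type*} [CommRing R]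

def minor₂ (x : Fin 2 → ι → R) (i j : ι) : R :=
  x 0 i * x 1 j - x 0 j * x 1 i

theorem mul_minor₂_eq (x : Fin 2 → ι → R) (k i j : ι) :
    x 0 k * minor₂ x i j = x 0 i * minor₂ x k j - x 0 j * minor₂ x k i := by
  unfold minor₂
  ring

theorem AddValuation.min_le_map_minor₂ (v : AddValuation R ℕ∞) (x : Fin 2 → ι → R) {k : ι}
    (hk : v (x 0 k) = 0) (i j : ι) :
    min (v (minor₂ x k i)) (v (minor₂ x k j)) ≤ v (minor₂ x i j) := by
  have hcancel : v (minor₂ x i j) = v (x 0 i * minor₂ x k j - x 0 j * minor₂ x k i) := by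
    rw [← mul_minor₂_eq, v.map_mul, hk, zero_add]
  rw [hcancel]
  refine v.map_le_sub ?_ ?_ <;> rw [v.map_mul]
  · exact (min_le_right _ _).trans le_add_self
  · exact (min_le_left _ _).trans le_add_self

theorem AddValuation.inf_map_minor₂_eq [Fintype ι] [LinearOrder ι] (v : AddValuation R ℕ∞)
    (x : Fin 2 → ι → R) {k : ι} (hk_min : ∀ i, k ≤ i) (hk : v (x 0 k) = 0) :
    (Finset.univ.inf fun p : ι × ι => if p.1 < p.2 then v (minor₂ x p.1 p.2) else ⊤)
      = Finset.univ.inf fun j : ι => if k < j then v (minor₂ x k j) else ⊤ := by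
  set m := Finset.univ.inf fun j : ι => if k < j then v (minor₂ x k j) else ⊤
  have hm : ∀ j, k < j → m ≤ v (minor₂ x k j) := fun j hj => by
    simpa only [if_pos hj] using
      Finset.inf_le (f := fun j : ι => if k < j then v (minor₂ x k j) else ⊤)
        (Finset.mem_univ j)
  refine le_antisymm (Finset.le_inf fun j _ => Finset.inf_le (Finset.mem_univ (k, j))) ?_
  refine Finset.le_inf fun ⟨i, j⟩ _ => ?_
  dsimp only
  split_ifs with hij
  · rcases (hk_min i).eq_or_lt with rfl | hki
    · exact hm j hij
    · exact (le_min (hm i hki) (hm j (hki.trans hij))).trans (v.min_le_map_minor₂ x hk i j)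
  · exact le_top

end Minor

/-- Lemma 2.4 (Lemma:Minors): for a 2×n matrix over a DVR whose (1,1)-entry is
`1 + x₁₁` with `x₁₁` in the maximal ideal and all other entries in the maximal
ideal, the minimum of the valuations of all 2×2 minors `M i j` (i < j) equals
the minimum over the minors `M 0 j` involving the first column. -/
theorem stmt1 (R : Type*) [CommRing R] [IsDomain R] [IsDiscreteValuationRing R]
    (n : ℕ) (hn : 0 < n) (b : Fin 2 → Fin n → R)
    (hb : ∀ k j, b k j ∈ IsLocalRing.maximalIdeal R)
    (x : Fin 2 → Fin n → R)
    (hx : x = fun k j => (if k = 0 ∧ j = (⟨0, hn⟩ : Fin n) then 1 else 0) + b k j) :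
    (Finset.univ.inf fun p : Fin n × Fin n =>
        if p.1 < p.2 then
          addVal R (x 0 p.1 * x 1 p.2 - x 0 p.2 * x 1 p.1)
        else (⊤ : ℕ∞))
      = Finset.univ.inf fun j : Fin n =>
          if (⟨0, hn⟩ : Fin n) < j then
            addVal R (x 0 ⟨0, hn⟩ * x 1 j - x 0 j * x 1 ⟨0, hn⟩)
          else (⊤ : ℕ∞) := by
  have hunit : IsUnit (x 0 ⟨0, hn⟩) := by
    simpa [hx] using isUnit_one_add_of_mem_maximalIdeal (hb 0 ⟨0, hn⟩)
  exact (addVal R).inf_map_minor₂_eq x (fun i => Nat.zero_le i.val) (addVal_eq_zero_iff.mpr hunit)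
end

section
/- For every n ≥ 1, the signed descent generating function of the hyperoctahedral group satisfies: the sum over all w in B_n of (−1)^{neg(w)} Z^{des(w)} equals (1−Z)^n, where neg(w) is the number of i in {1,...,n} with w(i) < 0 and des(w) is the number of descents of w (positions i in {0,1,...,n−1} with w(i) > w(i+1), with w(0) := 0). -/
/- The hyperoctahedral group `B_n`, modelled as permutations `w` of `ℤ` that are
odd (`w(−i) = −w(i)`) and fix every `i` with `|i| > n`; statistics on it. -/
def isBn (n : ℕ) (w : Equiv.Perm ℤ) : Prop :=
  (∀ i : ℤ, w (-i) = - w i) ∧ ∀ i : ℤ, (n : ℤ) < |i| → w i = i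

/- number of negative entries -/
noncomputable def negStat (n : ℕ) (w : Equiv.Perm ℤ) : ℕ :=
  ((Finset.Icc (1 : ℤ) (n : ℤ)).filter fun i => w i < 0).card

/- descent number: descents in positions 0,…,n−1 (note w(0) = 0 for w ∈ Bₙ) -/
noncomputable def desStat (n : ℕ) (w : Equiv.Perm ℤ) : ℕ :=
  ((Finset.Ico (0 : ℤ) (n : ℤ)).filter fun i => w (i + 1) < w i).card

/- inversion number -/
noncomputable def invStat (n : ℕ) (w : Equiv.Perm ℤ) : ℕ :=
  (((Finset.Icc (1 : ℤ) (n : ℤ)) ×ˢ (Finset.Icc (1 : ℤ) (n : ℤ))).filter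
    fun p => p.1 < p.2 ∧ w p.2 < w p.1).card

/- number of negative sum pairs -/
noncomputable def nspStat (n : ℕ) (w : Equiv.Perm ℤ) : ℕ :=
  (((Finset.Icc (1 : ℤ) (n : ℤ)) ×ˢ (Finset.Icc (1 : ℤ) (n : ℤ))).filter
    fun p => p.1 ≠ p.2 ∧ w p.1 + w p.2 < 0).card

/- Coxeter length, ℓ = inv + neg + nsp -/
noncomputable def lenStat (n : ℕ) (w : Equiv.Perm ℤ) : ℕ :=
  invStat n w + negStat n w + nspStat n w

/- the longest element w₀ = [−1,…,−n] of Bₙ -/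
def wzero (n : ℕ) : Equiv.Perm ℤ :=
  Function.Involutive.toPerm (fun i => if |i| ≤ (n : ℤ) then -i else i) (by
    intro i
    by_cases h : |i| ≤ (n : ℤ) <;> simp [h, abs_neg])

/-!
Let `r` exchange the values `n + 1` and `-(n + 1)`. Left multiplication by `r` is an involution
of `B_{n+1}` that changes `neg` by exactly one. If the value `±(n + 1)` sits at a position
`k ≤ n`, it is a peak or a valley among neighbours of absolute value at most `n`, and `r` turns
one into the other without changing `des`, so these terms cancel in pairs. The remaining
elements are the `w ∈ B_n` and the `r * w` with `w ∈ B_n`, whose weights are those of `w` in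
`B_n` and `-Z` times it. Hence the sum over `B_{n+1}` is `1 - Z` times the sum over `B_n`.
-/

open Finset Polynomial

section Hyperoctahedral

variable {n : ℕ} {w : Equiv.Perm ℤ}

theorem isBn.map_zero (h : isBn n w) : w 0 = 0 := by
  have h0 := h.1 0
  rw [neg_zero] at h0
  omega

theorem isBn.abs_apply_le (h : isBn n w) {i : ℤ} (hi : |i| ≤ n) : |w i| ≤ n := by
  by_contra! hwi
  rw [w.injective (h.2 _ hwi)] at hwi
  omega

theorem isBn.abs_apply_le_of_nonneg (h : isBn n w) {i : ℤ} (hi0 : 0 ≤ i) (hin : i ≤ n) :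
    |w i| ≤ n :=
  h.abs_apply_le (by rwa [abs_of_nonneg hi0])

theorem isBn.abs_symm_apply_le (h : isBn n w) {y : ℤ} (hy : |y| ≤ n) : |w.symm y| ≤ n := by
  by_contra! hwy
  have hfix := h.2 _ hwy
  rw [Equiv.apply_symm_apply] at hfix
  rw [← hfix] at hwy
  omega

theorem isBn.abs_apply_abs (h : isBn n w) (i : ℤ) : |w (|i|)| = |w i| := by
  rcases abs_choice i with hi | hi <;> rw [hi]
  rw [h.1, abs_neg]

theorem isBn.mono (h : isBn n w) {m : ℕ} (hnm : n ≤ m) : isBn m w :=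
  ⟨h.1, fun i hi => h.2 i (lt_of_le_of_lt (by exact_mod_cast hnm) hi)⟩

theorem isBn_iff_isBn_succ_and_apply_eq :
    isBn n w ↔ isBn (n + 1) w ∧ w ((n : ℤ) + 1) = (n : ℤ) + 1 := by
  constructor
  · intro h
    exact ⟨h.mono n.le_succ, h.2 _ (by rw [abs_of_nonneg (by positivity)]; omega)⟩
  · rintro ⟨h, htop⟩
    refine ⟨h.1, fun i hi => ?_⟩
    rcases (Int.add_one_le_of_lt hi).eq_or_lt with hi_eq | hi_lt
    · rcases (abs_eq (by positivity)).mp hi_eq.symm with rfl | rfl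
      · exact htop
      · rw [h.1, htop]
    · exact h.2 i (by push_cast; omega)

theorem setOf_isBn_finite (n : ℕ) : {w : Equiv.Perm ℤ | isBn n w}.Finite := by
  let I := Set.Icc (-(n : ℤ)) n
  refine Set.Finite.of_injOn (f := fun w (i : I) => w i) (t := {f | ∀ i, f i ∈ I})
    (fun w h i => ?_) (fun u hu v hv huv => ?_) (Set.Finite.pi' fun _ => Set.finite_Icc _ _)
  · exact abs_le.mp (h.abs_apply_le (abs_le.mpr i.2))
  · ext i
    by_cases hi : |i| ≤ n
    · exact congrFun huv ⟨i, abs_le.mp hi⟩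
    · rw [not_le] at hi
      rw [hu.2 i hi, hv.2 i hi]

noncomputable def Bn (n : ℕ) : Finset (Equiv.Perm ℤ) := (setOf_isBn_finite n).toFinset

theorem mem_Bn : w ∈ Bn n ↔ isBn n w := Set.Finite.mem_toFinset _

theorem coe_Bn (n : ℕ) : (Bn n : Set (Equiv.Perm ℤ)) = {w | isBn n w} :=
  Set.Finite.coe_toFinset _

def flipTop (n : ℕ) : Equiv.Perm ℤ := Equiv.swap ((n : ℤ) + 1) (-((n : ℤ) + 1))

theorem flipTop_apply_of_abs_ne {x : ℤ} (hx : |x| ≠ (n : ℤ) + 1) : flipTop n x = x := by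
  apply Equiv.swap_apply_of_ne_of_ne <;> rintro rfl <;>
    simp only [abs_neg, abs_of_nonneg (by positivity : (0 : ℤ) ≤ n + 1), ne_eq, not_true] at hx

theorem flipTop_apply_top : flipTop n ((n : ℤ) + 1) = -((n : ℤ) + 1) := Equiv.swap_apply_left _ _

theorem flipTop_apply_neg_top : flipTop n (-((n : ℤ) + 1)) = (n : ℤ) + 1 :=
  Equiv.swap_apply_right _ _

theorem flipTop_apply_neg (x : ℤ) : flipTop n (-x) = -flipTop n x := by
  by_cases hx : |x| = (n : ℤ) + 1
  · rcases (abs_eq (by positivity)).mp hx with rfl | rfl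
    · rw [flipTop_apply_top, flipTop_apply_neg_top, neg_neg]
    · rw [neg_neg, flipTop_apply_top, flipTop_apply_neg_top]
  · rw [flipTop_apply_of_abs_ne hx, flipTop_apply_of_abs_ne (by rwa [abs_neg])]

theorem flipTop_mul_flipTop_mul (w : Equiv.Perm ℤ) : flipTop n * (flipTop n * w) = w :=
  Equiv.swap_mul_self_mul _ _ w

theorem flipTop_mul_apply_of_abs_le {i : ℤ} (hi : |w i| ≤ n) : (flipTop n * w) i = w i :=
  flipTop_apply_of_abs_ne (by omega)

theorem isBn.flipTop_mul (h : isBn (n + 1) w) : isBn (n + 1) (flipTop n * w) := by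
  refine ⟨fun i => ?_, fun i hi => ?_⟩
  · rw [Equiv.Perm.mul_apply, Equiv.Perm.mul_apply, h.1, flipTop_apply_neg]
  · rw [Equiv.Perm.mul_apply, h.2 i hi]
    exact flipTop_apply_of_abs_ne (by push_cast at hi; omega)

theorem isBn_flipTop_mul_iff :
    isBn n (flipTop n * w) ↔ isBn (n + 1) w ∧ w ((n : ℤ) + 1) = -((n : ℤ) + 1) := by
  rw [isBn_iff_isBn_succ_and_apply_eq, Equiv.Perm.mul_apply, flipTop, Equiv.swap_apply_eq_iff,
    Equiv.swap_apply_left, ← flipTop]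
  refine and_congr_left fun _ => ⟨fun h => ?_, isBn.flipTop_mul⟩
  simpa only [flipTop_mul_flipTop_mul] using h.flipTop_mul

end Hyperoctahedral

section Statistics

variable {n : ℕ} {u v : Equiv.Perm ℤ}

theorem desStat_succ (n : ℕ) (u : Equiv.Perm ℤ) :
    desStat (n + 1) u = desStat n u + if u ((n : ℤ) + 1) < u n then 1 else 0 := by
  unfold desStat
  rw [Nat.cast_succ, ← insert_Ico_right_eq_Ico_add_one (Nat.cast_nonneg n), filter_insert]
  split_ifs
  · exact card_insert_of_notMem (by simp)
  · rfl

theorem negStat_succ (n : ℕ) (u : Equiv.Perm ℤ) :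
    negStat (n + 1) u = negStat n u + if u ((n : ℤ) + 1) < 0 then 1 else 0 := by
  unfold negStat
  rw [Nat.cast_succ, ← insert_Icc_right_eq_Icc_add_one (by omega), filter_insert]
  split_ifs
  · exact card_insert_of_notMem (by simp)
  · rfl

theorem desStat_congr (huv : ∀ i : ℤ, 0 ≤ i → i ≤ n → u i = v i) : desStat n u = desStat n v := by
  unfold desStat
  congr 1
  refine filter_congr fun i hi => ?_
  rw [mem_Ico] at hi
  rw [huv i hi.1 hi.2.le, huv (i + 1) (by omega) (by omega)]

-- The descent at the peak `k` of `u` moves to `k - 1` for the valley of `v`.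
theorem desStat_eq_of_peak_of_valley {k : ℤ} (hk0 : 0 < k) (hkn : k < n)
    (huv : ∀ i : ℤ, 0 ≤ i → i ≤ n → i ≠ k → u i = v i)
    (hu : u (k - 1) < u k ∧ u (k + 1) < u k) (hv : v k < v (k - 1) ∧ v k < v (k + 1)) :
    desStat n u = desStat n v := by
  classical
  have hk1 : k - 1 ∈ Ico (0 : ℤ) n := mem_Ico.mpr ⟨by omega, by omega⟩
  have hk : k ∈ (Ico (0 : ℤ) n).erase (k - 1) :=
    mem_erase.mpr ⟨by omega, mem_Ico.mpr ⟨by omega, hkn⟩⟩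
  have hsplit : ∀ f : ℤ → ℕ, ∑ i ∈ Ico (0 : ℤ) n, f i
      = f (k - 1) + f k + ∑ i ∈ ((Ico (0 : ℤ) n).erase (k - 1)).erase k, f i := fun f => by
    rw [add_assoc, add_sum_erase _ _ hk, add_sum_erase _ _ hk1]
  unfold desStat
  rw [card_filter, card_filter, hsplit, hsplit, sub_add_cancel]
  congr 1
  · simp [hu.1.not_gt, hu.2, hv.1, hv.2.not_gt]
  · refine sum_congr rfl fun i hi => ?_
    simp only [mem_erase, mem_Ico] at hi
    rw [huv i (by omega) (by omega) (by omega), huv (i + 1) (by omega) (by omega) (by omega)]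

theorem neg_one_pow_negStat_eq_neg {R : Type*} [Ring R] {k : ℤ} (hk : k ∈ Icc (1 : ℤ) n)
    (huv : ∀ i ∈ Icc (1 : ℤ) n, i ≠ k → u i = v i) (hflip : u k < 0 ↔ ¬v k < 0) :
    (-1 : R) ^ negStat n u = -(-1) ^ negStat n v := by
  classical
  unfold negStat
  rw [card_filter, card_filter, ← add_sum_erase _ _ hk, ← add_sum_erase _ _ hk,
    sum_congr rfl fun i hi => by rw [huv i (mem_of_mem_erase hi) (ne_of_mem_erase hi)]]
  by_cases hvk : v k < 0 <;> simp [hvk, hflip, pow_add]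

end Statistics

noncomputable def negDesWeight (n : ℕ) (w : Equiv.Perm ℤ) : ℚ[X] :=
  (-1) ^ negStat n w * X ^ desStat n w

section Recursion

variable {n : ℕ} {w : Equiv.Perm ℤ}

theorem negStat_succ_of_isBn (h : isBn n w) : negStat (n + 1) w = negStat n w := by
  rw [negStat_succ, (isBn_iff_isBn_succ_and_apply_eq.mp h).2, if_neg (by omega), add_zero]

theorem desStat_succ_of_isBn (h : isBn n w) : desStat (n + 1) w = desStat n w := by
  have hn := abs_le.mp (h.abs_apply_le_of_nonneg (i := n) (by positivity) le_rfl)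
  rw [desStat_succ, (isBn_iff_isBn_succ_and_apply_eq.mp h).2, if_neg (by omega), add_zero]

theorem negDesWeight_succ_of_isBn (h : isBn n w) :
    negDesWeight (n + 1) w = negDesWeight n w := by
  rw [negDesWeight, negDesWeight, negStat_succ_of_isBn h, desStat_succ_of_isBn h]

theorem negDesWeight_succ_flipTop_mul_of_isBn (h : isBn n w) :
    negDesWeight (n + 1) (flipTop n * w) = -X * negDesWeight n w := by
  have htop := (isBn_iff_isBn_succ_and_apply_eq.mp h).2
  have hfix : ∀ i : ℤ, 0 ≤ i → i ≤ n → (flipTop n * w) i = w i := fun i hi0 hin =>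
    flipTop_mul_apply_of_abs_le (h.abs_apply_le_of_nonneg hi0 hin)
  have hneg : (-1 : ℚ[X]) ^ negStat (n + 1) (flipTop n * w) = -(-1) ^ negStat n w := by
    rw [← negStat_succ_of_isBn h]
    refine neg_one_pow_negStat_eq_neg (k := n + 1) (by simp) (fun i hi hik => ?_) ?_
    · rw [mem_Icc] at hi
      exact hfix i (by omega) (by push_cast at hi; omega)
    · rw [Equiv.Perm.mul_apply, htop, flipTop_apply_top]
      omega
  have hdes : desStat (n + 1) (flipTop n * w) = desStat n w + 1 := by
    have hn := abs_le.mp (h.abs_apply_le_of_nonneg (i := n) (by positivity) le_rfl)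
    rw [desStat_succ, desStat_congr hfix, Equiv.Perm.mul_apply, htop, flipTop_apply_top,
      hfix n (by positivity) le_rfl, if_pos (by omega)]
  rw [negDesWeight, negDesWeight, hneg, hdes, pow_succ]
  ring

end Recursion

section Cancellation

variable {n : ℕ} {w : Equiv.Perm ℤ}

theorem isBn.abs_apply_le_of_ne (h : isBn (n + 1) w) {k i : ℤ} (hk : 0 ≤ k)
    (hwk : |w k| = (n : ℤ) + 1) (hi0 : 0 ≤ i) (hin : i ≤ (n : ℤ) + 1) (hik : i ≠ k) :
    |w i| ≤ n := by
  have hle : |w i| ≤ (n : ℤ) + 1 := by exact_mod_cast h.abs_apply_le_of_nonneg hi0 (by omega)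
  refine Int.le_of_lt_add_one (lt_of_le_of_ne hle fun heq => ?_)
  rcases abs_eq_abs.mp (heq.trans hwk.symm) with hik' | hik'
  · exact hik (w.injective hik')
  · rw [← h.1] at hik'
    have := w.injective hik'
    omega

theorem isBn.exists_abs_apply_eq (h : isBn (n + 1) w) (htop : |w ((n : ℤ) + 1)| ≠ (n : ℤ) + 1) :
    ∃ k : ℤ, 1 ≤ k ∧ k ≤ n ∧ |w k| = (n : ℤ) + 1 := by
  set j := w.symm ((n : ℤ) + 1)
  have hwj : |w (|j|)| = (n : ℤ) + 1 := by
    rw [h.abs_apply_abs, Equiv.apply_symm_apply, abs_of_nonneg (by positivity)]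
  have hj : |j| ≤ (n : ℤ) + 1 := by
    exact_mod_cast h.abs_symm_apply_le (y := (n : ℤ) + 1)
      (by rw [abs_of_nonneg (by positivity)]; simp)
  refine ⟨|j|, ?_, ?_, hwj⟩
  · by_contra! hj0
    rw [show |j| = 0 by have := abs_nonneg j; omega, h.map_zero, abs_zero] at hwj
    omega
  · by_contra! hjn
    rw [show |j| = (n : ℤ) + 1 by omega] at hwj
    exact htop hwj

theorem negDesWeight_flipTop_mul_eq_neg (h : isBn (n + 1) w) {k : ℤ} (hk1 : 1 ≤ k) (hkn : k ≤ n)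
    (hwk : |w k| = (n : ℤ) + 1) :
    negDesWeight (n + 1) (flipTop n * w) = -negDesWeight (n + 1) w := by
  have hsmall : ∀ i : ℤ, 0 ≤ i → i ≤ (n : ℤ) + 1 → i ≠ k → |w i| ≤ n := fun i hi0 hin hik =>
    h.abs_apply_le_of_ne (by omega) hwk hi0 hin hik
  have hfix : ∀ i : ℤ, 0 ≤ i → i ≤ (n : ℤ) + 1 → i ≠ k → (flipTop n * w) i = w i :=
    fun i hi0 hin hik => flipTop_mul_apply_of_abs_le (hsmall i hi0 hin hik)
  have hwk' := (abs_eq (by positivity)).mp hwk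
  have hflip : (flipTop n * w) k = -w k := by
    rcases hwk' with hw | hw <;> rw [Equiv.Perm.mul_apply, hw]
    · rw [flipTop_apply_top]
    · rw [flipTop_apply_neg_top, neg_neg]
  have hl := hfix (k - 1) (by omega) (by omega) (by omega)
  have hr := hfix (k + 1) (by omega) (by omega) (by omega)
  have hl' := abs_le.mp (hsmall (k - 1) (by omega) (by omega) (by omega))
  have hr' := abs_le.mp (hsmall (k + 1) (by omega) (by omega) (by omega))
  have hagree : ∀ i : ℤ, 0 ≤ i → i ≤ ((n + 1 : ℕ) : ℤ) → i ≠ k → w i = (flipTop n * w) i :=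
    fun i hi0 hin hik => (hfix i hi0 (by push_cast at hin; exact hin) hik).symm
  have hdes : desStat (n + 1) (flipTop n * w) = desStat (n + 1) w := by
    have hk : k < ((n + 1 : ℕ) : ℤ) := by push_cast; omega
    rcases hwk' with hw | hw
    · exact (desStat_eq_of_peak_of_valley (by omega) hk hagree
        ⟨by omega, by omega⟩ ⟨by omega, by omega⟩).symm
    · exact desStat_eq_of_peak_of_valley (by omega) hk
        (fun i hi0 hin hik => (hagree i hi0 hin hik).symm) ⟨by omega, by omega⟩ ⟨by omega, by omega⟩
  have hneg : (-1 : ℚ[X]) ^ negStat (n + 1) (flipTop n * w) = -(-1) ^ negStat (n + 1) w := by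
    refine neg_one_pow_negStat_eq_neg (k := k) (by simp; omega) (fun i hi hik => ?_) (by omega)
    rw [mem_Icc] at hi
    exact hfix i (by omega) (by push_cast at hi; omega) hik
  rw [negDesWeight, negDesWeight, hneg, hdes, neg_mul]

end Cancellation

section Sum

variable (n : ℕ)

theorem sum_negDesWeight_filter_abs_top_ne :
    ∑ w ∈ (Bn (n + 1)).filter (fun w => |w ((n : ℤ) + 1)| ≠ (n : ℤ) + 1),
      negDesWeight (n + 1) w = 0 := by
  refine sum_involution (fun w _ => flipTop n * w) (fun w hw => ?_) (fun w _ _ => ?_)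
    (fun w hw => ?_) (fun w _ => flipTop_mul_flipTop_mul w)
  · rw [mem_filter, mem_Bn] at hw
    obtain ⟨k, hk1, hkn, hwk⟩ := hw.1.exists_abs_apply_eq hw.2
    rw [negDesWeight_flipTop_mul_eq_neg hw.1 hk1 hkn hwk, add_neg_cancel]
  · rw [Ne, mul_eq_right]
    intro hone
    have htop := congrArg (· ((n : ℤ) + 1)) hone
    simp only [flipTop_apply_top, Equiv.Perm.one_apply] at htop
    omega
  · rw [mem_filter, mem_Bn] at hw ⊢
    rw [Equiv.Perm.mul_apply, flipTop_apply_of_abs_ne hw.2]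
    exact ⟨hw.1.flipTop_mul, hw.2⟩

theorem sum_negDesWeight_filter_abs_top_eq :
    ∑ w ∈ (Bn (n + 1)).filter (fun w => |w ((n : ℤ) + 1)| = (n : ℤ) + 1), negDesWeight (n + 1) w
      = (1 - X) * ∑ w ∈ Bn n, negDesWeight n w := by
  set T := (Bn (n + 1)).filter (fun w => |w ((n : ℤ) + 1)| = (n : ℤ) + 1)
  have htop_pos : T.filter (fun w => w ((n : ℤ) + 1) = (n : ℤ) + 1) = Bn n := by
    ext w
    simp only [T, mem_filter, mem_Bn]
    rw [isBn_iff_isBn_succ_and_apply_eq (n := n)]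
    constructor
    · exact fun h => ⟨h.1.1, h.2⟩
    · exact fun h => ⟨⟨h.1, by rw [h.2, abs_of_nonneg (by positivity)]⟩, h.2⟩
  have hmem_neg : ∀ w, w ∈ T.filter (fun w => ¬w ((n : ℤ) + 1) = (n : ℤ) + 1) ↔
      isBn n (flipTop n * w) := by
    intro w
    simp only [T, mem_filter, mem_Bn, isBn_flipTop_mul_iff,
      abs_eq (by positivity : (0 : ℤ) ≤ n + 1)]
    constructor
    · rintro ⟨⟨h, htop | htop⟩, hne⟩
      exacts [absurd htop hne, ⟨h, htop⟩]
    · rintro ⟨h, htop⟩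
      exact ⟨⟨h, Or.inr htop⟩, by omega⟩
  have htop_neg :
      ∑ w ∈ T.filter (fun w => ¬w ((n : ℤ) + 1) = (n : ℤ) + 1), negDesWeight (n + 1) w
        = ∑ v ∈ Bn n, negDesWeight (n + 1) (flipTop n * v) := by
    refine sum_nbij' (flipTop n * ·) (flipTop n * ·) (fun w hw => ?_) (fun v hv => ?_)
      (fun w _ => flipTop_mul_flipTop_mul w) (fun v _ => flipTop_mul_flipTop_mul v)
      (fun w _ => by rw [flipTop_mul_flipTop_mul])
    · exact mem_Bn.mpr ((hmem_neg w).mp hw)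
    · rw [hmem_neg, flipTop_mul_flipTop_mul]
      exact mem_Bn.mp hv
  rw [← sum_filter_add_sum_filter_not T (fun w => w ((n : ℤ) + 1) = (n : ℤ) + 1), htop_pos,
    htop_neg, ← sum_add_distrib, mul_sum]
  refine sum_congr rfl fun v hv => ?_
  rw [negDesWeight_succ_of_isBn (mem_Bn.mp hv),
    negDesWeight_succ_flipTop_mul_of_isBn (mem_Bn.mp hv)]
  ring

theorem sum_negDesWeight_Bn : ∑ w ∈ Bn n, negDesWeight n w = (1 - X) ^ n := by
  induction n with
  | zero =>
    have hB0 : Bn 0 = {1} := by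
      ext w
      rw [mem_Bn, mem_singleton]
      refine ⟨fun h => Equiv.ext fun i => ?_, fun h => ⟨by simp [h], by simp [h]⟩⟩
      rcases eq_or_ne i 0 with rfl | hi
      · exact h.map_zero
      · exact h.2 i (by simpa using hi)
    simp [hB0, negDesWeight, negStat, desStat]
  | succ n ih =>
    rw [← sum_filter_add_sum_filter_not (Bn (n + 1)) (fun w => |w ((n : ℤ) + 1)| = (n : ℤ) + 1),
      sum_negDesWeight_filter_abs_top_eq, sum_negDesWeight_filter_abs_top_ne, ih, add_zero,
      pow_succ, mul_comm]

end Sum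

theorem stmt4_general (n : ℕ) :
    ∑ᶠ w ∈ {w : Equiv.Perm ℤ | isBn n w},
        ((-1 : Polynomial ℚ) ^ negStat n w * (Polynomial.X : Polynomial ℚ) ^ desStat n w)
      = (1 - Polynomial.X) ^ n := by
  rw [← coe_Bn, finsum_mem_coe_finset]
  exact sum_negDesWeight_Bn n

theorem stmt4 (n : ℕ) (hn : 1 ≤ n) :
    ∑ᶠ w ∈ {w : Equiv.Perm ℤ | isBn n w},
        ((-1 : Polynomial ℚ) ^ negStat n w * (Polynomial.X : Polynomial ℚ) ^ desStat n w)
      = (1 - Polynomial.X) ^ n :=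
  stmt4_general n
end

section
/- For n ≥ 1 and δ ∈ {0,1}, set a = 2n+δ and consider the rational function Z(q, T1, T2) = (1 − q^{C(a−1,2)} T1^{a−1} T2) / ((1 − q^{C(a,2)} T2)(1 − q^{C(a,2)+1} T1^{a−1} T2)) in ℚ(q, T1, T2). Then Z satisfies the functional equation: substituting q → q^{−1}, T1 → T1^{−1}, T2 → T2^{−1} yields −q^{C(a+1,2)} T2 · Z(q, T1, T2). -/
noncomputable section

/- The field ℚ(q, T₁, T₂) of rational functions in three variables. -/
abbrev Kfun : Type := FractionRing (MvPolynomial (Fin 3) ℚ)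

def qv : Kfun := algebraMap (MvPolynomial (Fin 3) ℚ) Kfun (MvPolynomial.X 0)
def t1v : Kfun := algebraMap (MvPolynomial (Fin 3) ℚ) Kfun (MvPolynomial.X 1)
def t2v : Kfun := algebraMap (MvPolynomial (Fin 3) ℚ) Kfun (MvPolynomial.X 2)

/- Local bivariate conjugacy class zeta function of F_{n,δ}, a = 2n+δ. -/
def Zf (a : ℕ) (x u1 u2 : Kfun) : Kfun :=
  (1 - x ^ ((a - 1).choose 2) * u1 ^ (a - 1) * u2) /
    ((1 - x ^ (a.choose 2) * u2) * (1 - x ^ (a.choose 2 + 1) * u1 ^ (a - 1) * u2))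

/-!
Every factor of `Z` has the form `1 - M` with `M` a monomial, and `1 - M⁻¹ = -M⁻¹ (1 - M)`.
Inverting the variables therefore multiplies `Z` by `-D₁ D₂ / N`, where `N` is the monomial of
the numerator and `D₁`, `D₂` those of the denominator; this ratio is `q^{C(a+1,2)} T₂` because
`C(a,2) - C(a-1,2) = a - 1` and `C(a+1,2) - C(a,2) = a`.
-/

theorem one_sub_inv_eq_neg_inv_mul {K : Type*} [Field K] {M : K} (hM : M ≠ 0) :
    1 - M⁻¹ = -M⁻¹ * (1 - M) := by
  rw [neg_mul, mul_sub, mul_one, inv_mul_cancel₀ hM]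
  ring

theorem one_sub_inv_div_eq {K : Type*} [Field K] {N D₁ D₂ : K}
    (hN : N ≠ 0) (hD₁ : D₁ ≠ 0) (hD₂ : D₂ ≠ 0) :
    (1 - N⁻¹) / ((1 - D₁⁻¹) * (1 - D₂⁻¹))
      = -(D₁ * D₂ / N) * ((1 - N) / ((1 - D₁) * (1 - D₂))) := by
  rw [one_sub_inv_eq_neg_inv_mul hN, one_sub_inv_eq_neg_inv_mul hD₁,
    one_sub_inv_eq_neg_inv_mul hD₂]
  field_simp

theorem choose_two_add_choose_two_succ {a : ℕ} (ha : 1 ≤ a) :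
    a.choose 2 + (a.choose 2 + 1) = (a - 1).choose 2 + (a + 1).choose 2 := by
  obtain ⟨b, rfl⟩ := Nat.exists_eq_add_of_le' ha
  simp only [Nat.add_sub_cancel, Nat.choose_succ_succ, Nat.choose_one_right, Nat.choose_zero_right]
  ring

theorem Zf_inv {a : ℕ} (ha : 1 ≤ a) {x u₁ u₂ : Kfun} (hx : x ≠ 0) (hu₁ : u₁ ≠ 0)
    (hu₂ : u₂ ≠ 0) :
    Zf a x⁻¹ u₁⁻¹ u₂⁻¹ = -x ^ ((a + 1).choose 2) * u₂ * Zf a x u₁ u₂ := by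
  have hratio : x ^ (a.choose 2) * u₂ * (x ^ (a.choose 2 + 1) * u₁ ^ (a - 1) * u₂)
      / (x ^ ((a - 1).choose 2) * u₁ ^ (a - 1) * u₂) = x ^ ((a + 1).choose 2) * u₂ := by
    have hexp : x ^ (a.choose 2) * x ^ (a.choose 2 + 1)
        = x ^ ((a - 1).choose 2) * x ^ ((a + 1).choose 2) := by
      rw [← pow_add, ← pow_add, choose_two_add_choose_two_succ ha]
    rw [div_eq_iff (by positivity)]
    linear_combination (u₁ ^ (a - 1) * u₂ ^ 2) * hexp
  simp only [Zf, inv_pow, ← mul_inv]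
  rw [one_sub_inv_div_eq (by positivity) (by positivity) (by positivity), hratio]
  ring

theorem algebraMap_X_ne_zero (i : Fin 3) :
    algebraMap (MvPolynomial (Fin 3) ℚ) Kfun (MvPolynomial.X i) ≠ 0 :=
  (map_ne_zero_iff _ (IsFractionRing.injective _ _)).mpr (MvPolynomial.X_ne_zero i)

theorem stmt16_general (n : ℕ) (hn : 1 ≤ n) (δ : ℕ) :
    Zf (2 * n + δ) qv⁻¹ t1v⁻¹ t2v⁻¹
      = -qv ^ ((2 * n + δ + 1).choose 2) * t2v * Zf (2 * n + δ) qv t1v t2v :=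
  Zf_inv (by omega) (algebraMap_X_ne_zero 0) (algebraMap_X_ne_zero 1) (algebraMap_X_ne_zero 2)

theorem stmt16 (n : ℕ) (hn : 1 ≤ n) (δ : ℕ) (hδ : δ ≤ 1) :
    Zf (2 * n + δ) qv⁻¹ t1v⁻¹ t2v⁻¹
      = -qv ^ ((2 * n + δ + 1).choose 2) * t2v * Zf (2 * n + δ) qv t1v t2v :=
  stmt16_general n hn δ
end
end
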